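/- Define Ind_ℓ(m) = argmin_{1≤j≤m} ( Opt_{ℓ-1}(j) + Σ_{i=j+1}^m max{0, t(v_i) − j} ) (taking, say, the smallest minimizer). Then for every 1 ≤ ℓ ≤ λ, Ind_ℓ is monotone: k < m implies Ind_ℓ(k) ≤ Ind_ℓ(m). -/

import Mathlib

open Finset

/-- Influence process on a complete graph with node set `{0,…,m-1}`, thresholds `t`,
incentives `p`: at round 0 exactly the nodes with `p v = t v` are influenced; afterwards
a node is influenced once the number of already influenced other nodes reaches `t v - p v`. -/
def kInfl (m : ℕ) (t p : ℕ → ℕ) : ℕ → Finset ℕ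
  | 0 => (range m).filter fun v => p v = t v
  | ℓ + 1 => kInfl m t p ℓ ∪ (range m).filter fun v =>
      t v - p v ≤ ((kInfl m t p ℓ).erase v).card

/-- `kOpt t ℓ m`: minimum total incentive influencing all of the complete graph on
`{0,…,m-1}` within `ℓ` rounds. -/
noncomputable def kOpt (t : ℕ → ℕ) (ℓ m : ℕ) : ℕ :=
  sInf {c : ℕ | ∃ p : ℕ → ℕ, (∀ v < m, p v ≤ t v) ∧
    kInfl m t p ℓ = range m ∧ c = ∑ v ∈ range m, p v}

/-- The objective function of the recurrence for `Opt_ℓ(m)`. -/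
noncomputable def kf (t : ℕ → ℕ) (ℓ m j : ℕ) : ℕ :=
  kOpt t (ℓ - 1) j + ∑ i ∈ Ico j m, (t i - j)

/-- `Ind_ℓ(m)`: the smallest minimizer `j ∈ [1,m]` of the recurrence objective. -/
noncomputable def kInd (t : ℕ → ℕ) (ℓ m : ℕ) : ℕ :=
  sInf {j | 1 ≤ j ∧ j ≤ m ∧ ∀ j', 1 ≤ j' → j' ≤ m → kf t ℓ m j ≤ kf t ℓ m j'}

/-!
Moving the right end from `k` to `m > k` adds `∑_{i ∈ [k, m)} (t i - j)` to the objective at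
every `j ≤ k`, and this increment is antitone in `j`. If the smallest minimizer `b` for `m` lay
below the smallest minimizer `a` for `k`, then `b` would be strictly worse than `a` for `k`
(as `a` is the smallest minimizer), and the larger increment at `b` would keep it strictly
worse for `m`, contradicting the minimality of `b`.
-/

lemma kf_eq_add_sum_Ico (t : ℕ → ℕ) (ℓ : ℕ) {j k m : ℕ} (hjk : j ≤ k) (hkm : k ≤ m) :
    kf t ℓ m j = kf t ℓ k j + ∑ i ∈ Ico k m, (t i - j) := by
  rw [kf, kf, ← sum_Ico_consecutive _ hjk hkm, add_assoc]

lemma kInd_spec (t : ℕ → ℕ) (ℓ : ℕ) {k : ℕ} (hk : 1 ≤ k) :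
    1 ≤ kInd t ℓ k ∧ kInd t ℓ k ≤ k ∧
      ∀ j, 1 ≤ j → j ≤ k → kf t ℓ k (kInd t ℓ k) ≤ kf t ℓ k j := by
  obtain ⟨j, hj, hmin⟩ :=
    exists_min_image (Icc 1 k) (kf t ℓ k) ⟨1, mem_Icc.mpr ⟨le_rfl, hk⟩⟩
  rw [mem_Icc] at hj
  exact Nat.sInf_mem
    (s := {j | 1 ≤ j ∧ j ≤ k ∧ ∀ j', 1 ≤ j' → j' ≤ k → kf t ℓ k j ≤ kf t ℓ k j'})
    ⟨j, hj.1, hj.2, fun j' h1 h2 => hmin j' (mem_Icc.mpr ⟨h1, h2⟩)⟩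

lemma kf_kInd_lt_of_lt_kInd (t : ℕ → ℕ) (ℓ : ℕ) {j k : ℕ} (hk : 1 ≤ k) (hj : 1 ≤ j)
    (hjk : j < kInd t ℓ k) : kf t ℓ k (kInd t ℓ k) < kf t ℓ k j := by
  obtain ⟨-, hind_le, hmin⟩ := kInd_spec t ℓ hk
  have hnot := Nat.notMem_of_lt_sInf hjk
  simp only [Set.mem_ofPred_eq, not_and, not_forall, not_le] at hnot
  obtain ⟨j', hj', hj'k, hlt⟩ := hnot hj (hjk.le.trans hind_le)
  exact (hmin j' hj' hj'k).trans_lt hlt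

theorem clique_index_monotone_general (ℓ k m : ℕ) (t : ℕ → ℕ)
    (hk1 : 1 ≤ k) (hkm : k < m) :
    kInd t ℓ k ≤ kInd t ℓ m := by
  obtain ⟨ha_pos, ha_le, -⟩ := kInd_spec t ℓ hk1
  obtain ⟨hb_pos, -, hb_min⟩ := kInd_spec t ℓ (hk1.trans hkm.le)
  set a := kInd t ℓ k
  set b := kInd t ℓ m
  by_contra! hba
  have hstrict : kf t ℓ k a < kf t ℓ k b := kf_kInd_lt_of_lt_kInd t ℓ hk1 hb_pos hba
  have htail : ∑ i ∈ Ico k m, (t i - a) ≤ ∑ i ∈ Ico k m, (t i - b) :=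
    sum_le_sum fun i _ => tsub_le_tsub_left hba.le _
  have hworse : kf t ℓ m a < kf t ℓ m b := by
    rw [kf_eq_add_sum_Ico t ℓ ha_le hkm.le, kf_eq_add_sum_Ico t ℓ (hba.le.trans ha_le) hkm.le]
    exact add_lt_add_of_lt_of_le hstrict htail
  exact (hb_min a ha_pos (ha_le.trans hkm.le)).not_gt hworse

/-- the minimizing index is monotone: `k < m → Ind_ℓ(k) ≤ Ind_ℓ(m)`. -/
theorem clique_index_monotone (n lam ℓ k m : ℕ) (t : ℕ → ℕ)
    (hl1 : 1 ≤ ℓ) (hl2 : ℓ ≤ lam) (hk1 : 1 ≤ k) (hkm : k < m) (hmn : m ≤ n)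
    (hmono : ∀ i j, i ≤ j → j < n → t i ≤ t j)
    (hbd : ∀ v < n, 1 ≤ t v ∧ t v ≤ n - 1) :
    kInd t ℓ k ≤ kInd t ℓ m :=
  clique_index_monotone_general ℓ k m t hk1 hkm
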